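/- arXiv:2411.11662 — 2 statements merged into one kernel-verified Lean document; each statement's English description precedes it below -/
import Mathlib

section
/- The Kleisli extension of the convex powerset monad distributes over finite nondeterministic (convex) unions: f†(⋓_{i∈I} S_i) = ⋓_{i∈I} f†(S_i) for any finite index set I. -/
/-- A discrete probability distribution on `X ∪ {⊥}` (`⊥` encoded as `none`). -/
def IsDistO {X : Type*} (μ : Option X → ℝ) : Prop :=
  (∀ a, 0 ≤ μ a) ∧ HasSum μ 1

/-- The order on distributions: pointwise `≤` on `X` and reversed on `⊥`. -/
def dLe {X : Type*} (μ ν : Option X → ℝ) : Prop :=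
  (∀ x : X, μ (some x) ≤ ν (some x)) ∧ ν none ≤ μ none

/-- `S` is an element of the convex powerset `C(X)`: a nonempty, up-closed, convex,
Cauchy-closed (topologically closed in the product topology) set of distributions
over `X ∪ {⊥}`. -/
def IsCSet {X : Type*} (S : Set (Option X → ℝ)) : Prop :=
  S.Nonempty ∧ (∀ μ ∈ S, IsDistO μ) ∧
  (∀ μ ∈ S, ∀ ν ∈ S, ∀ p : ℝ, 0 ≤ p → p ≤ 1 →
    (fun a => p * μ a + (1 - p) * ν a) ∈ S) ∧
  (∀ μ ∈ S, ∀ ν, IsDistO ν → dLe μ ν → ν ∈ S) ∧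
  IsClosed S

/-- The probability a distribution assigns to an event `A ⊆ X`. -/
noncomputable def probOf {X : Type*} (μ : Option X → ℝ) (A : Set X) : ℝ :=
  ∑' x : A, μ (some ↑x)

/-- The minimum probability of the event `A` over the set of distributions `S`. -/
noncomputable def minProb {X : Type*} (S : Set (Option X → ℝ)) (A : Set X) : ℝ :=
  sInf ((fun μ => probOf μ A) '' S)

/-- Kleisli extension of `f` for the convex powerset monad: mix, for each state in
the support of some `μ ∈ S`, a continuation distribution drawn from `f`; at `⊥`
the continuation may be any distribution (the bottom element `⊥_C`). -/
def kleisli {X : Type*} (f : X → Set (Option X → ℝ)) (S : Set (Option X → ℝ)) :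
    Set (Option X → ℝ) :=
  {g | ∃ μ ∈ S, ∃ ν : Option X → (Option X → ℝ),
        (∀ a, IsDistO (ν a)) ∧
        (∀ x : X, μ (some x) ≠ 0 → ν (some x) ∈ f x) ∧
        g = fun b => ∑' a : Option X, μ a * ν a b}

/-- Binary convex (nondeterministic) union `S ⋓ T`. -/
def cUnion2 {X : Type*} (S T : Set (Option X → ℝ)) : Set (Option X → ℝ) :=
  {g | ∃ μ ∈ S, ∃ ν ∈ T, ∃ p : ℝ, 0 ≤ p ∧ p ≤ 1 ∧
        g = fun a => p * μ a + (1 - p) * ν a}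

/-- Finite convex (nondeterministic) union `⋓_{i∈s} S_i`: all convex combinations
of choices from the `S_i`. -/
def cUnionF {I X : Type*} (s : Finset I) (S : I → Set (Option X → ℝ)) :
    Set (Option X → ℝ) :=
  {g | ∃ w : I → ℝ, (∀ i, 0 ≤ w i) ∧ (∑ i ∈ s, w i) = 1 ∧
        ∃ μ : I → (Option X → ℝ), (∀ i ∈ s, μ i ∈ S i) ∧
          g = fun a => ∑ i ∈ s, w i * μ i a}

section Helpers

variable {I X : Type*}

/-- Every value of a distribution is at most `1`. -/
lemma IsDistO.le_one {μ : Option X → ℝ} (h : IsDistO μ) (b : Option X) : μ b ≤ 1 :=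
  le_hasSum h.2 b fun j _ => h.1 j

/-- The Dirac distribution at `⊥`. -/
noncomputable def dBot (X : Type*) : Option X → ℝ := fun b => Option.elim b 1 (fun _ => 0)

lemma isDistO_dBot : IsDistO (dBot X) := by
  classical
  constructor
  · intro a; cases a <;> simp [dBot]
  · have he : dBot X = fun b : Option X => if b = none then (1:ℝ) else 0 := by
      funext b; cases b <;> simp [dBot]
    rw [he]
    exact hasSum_ite_eq none 1

lemma summable_mul_distO {μ : Option X → ℝ} (hμ : IsDistO μ)
    {ν : Option X → Option X → ℝ} (hν : ∀ a, IsDistO (ν a)) (b : Option X) :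
    Summable fun a => μ a * ν a b :=
  Summable.of_nonneg_of_le (fun a => mul_nonneg (hμ.1 a) ((hν a).1 b))
    (fun a => by
      have := (hν a).le_one b
      nlinarith [hμ.1 a]) hμ.2.summable

lemma isDistO_convSum (s : Finset I) (w : I → ℝ) (hw0 : ∀ i ∈ s, 0 ≤ w i)
    (hw1 : ∑ i ∈ s, w i = 1) (p : I → Option X → ℝ) (hp : ∀ i ∈ s, IsDistO (p i)) :
    IsDistO fun b => ∑ i ∈ s, w i * p i b := by
  constructor
  · intro a; exact Finset.sum_nonneg fun i hi => mul_nonneg (hw0 i hi) ((hp i hi).1 a)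
  · have h := hasSum_sum (f := fun i b => w i * p i b) (a := fun i => w i * 1) (s := s)
      (fun i hi => ((hp i hi).2).mul_left (w i))
    simpa [hw1] using h

/-- A finite convex combination of elements of a convex set (allowing arbitrary points
at zero weights) belongs to the set. -/
lemma csets_conv {C : Set (Option X → ℝ)} (hC : IsCSet C) (s : Finset I) :
    ∀ (c : I → ℝ), (∀ i ∈ s, 0 ≤ c i) → (∑ i ∈ s, c i) = 1 →
    ∀ (p : I → Option X → ℝ), (∀ i ∈ s, c i ≠ 0 → p i ∈ C) →
    (fun b => ∑ i ∈ s, c i * p i b) ∈ C := by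
  classical
  induction s using Finset.induction with
  | empty => intro c _ h1 _ _; simp at h1
  | @insert a s ha ih =>
    intro c hc0 hc1 p hp
    rw [Finset.sum_insert ha] at hc1
    by_cases hca : c a = 0
    · have he : (fun b => ∑ i ∈ insert a s, c i * p i b)
          = fun b => ∑ i ∈ s, c i * p i b := by
        funext b; rw [Finset.sum_insert ha, hca]; ring
      rw [he]
      exact ih c (fun i hi => hc0 i (Finset.mem_insert_of_mem hi)) (by linarith) p
        (fun i hi => hp i (Finset.mem_insert_of_mem hi))
    · by_cases ht : (∑ i ∈ s, c i) = 0
      · have hz : ∀ i ∈ s, c i = 0 := fun i hi =>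
          (Finset.sum_eq_zero_iff_of_nonneg
            (fun j hj => hc0 j (Finset.mem_insert_of_mem hj))).1 ht i hi
        have hca1 : c a = 1 := by linarith
        have he : (fun b => ∑ i ∈ insert a s, c i * p i b) = p a := by
          funext b
          rw [Finset.sum_insert ha, Finset.sum_eq_zero (fun i hi => by rw [hz i hi]; ring),
            hca1]; ring
        rw [he]
        exact hp a (Finset.mem_insert_self a s) hca
      · have htpos : 0 < ∑ i ∈ s, c i :=
          lt_of_le_of_ne (Finset.sum_nonneg fun i hi =>
            hc0 i (Finset.mem_insert_of_mem hi)) (Ne.symm ht)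
        have hmem : (fun b => ∑ i ∈ s, (c i / (∑ j ∈ s, c j)) * p i b) ∈ C := by
          refine ih _ (fun i hi => div_nonneg (hc0 i (Finset.mem_insert_of_mem hi))
            htpos.le) ?_ p ?_
          · rw [← Finset.sum_div, div_self ht]
          · intro i hi hne
            refine hp i (Finset.mem_insert_of_mem hi) ?_
            intro h0; exact hne (by rw [h0]; simp)
        have hconv := hC.2.2.1 (p a) (hp a (Finset.mem_insert_self a s) hca)
          _ hmem (c a) (hc0 a (Finset.mem_insert_self a s)) (by linarith)
        have he : (fun x => c a * p a x
            + (1 - c a) * ∑ i ∈ s, (c i / (∑ j ∈ s, c j)) * p i x)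
            = fun b => ∑ i ∈ insert a s, c i * p i b := by
          funext b
          rw [Finset.sum_insert ha]
          have h1ca : 1 - c a = ∑ j ∈ s, c j := by linarith
          rw [h1ca, Finset.mul_sum]
          congr 1
          refine Finset.sum_congr rfl fun i _ => ?_
          rw [← mul_assoc, mul_comm (∑ j ∈ s, c j) (c i / (∑ j ∈ s, c j)),
            div_mul_cancel₀ _ ht]
        rw [← he]
        exact hconv

end Helpers

/-- the Kleisli extension of the convex powerset monad distributes
over finite nondeterministic (convex) unions:
`f†(⋓_{i∈s} S_i) = ⋓_{i∈s} f†(S_i)`. -/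
theorem stmt_10 {I X : Type*} [Countable X] (s : Finset I)
    (f : X → Set (Option X → ℝ)) (hf : ∀ x, IsCSet (f x))
    (S : I → Set (Option X → ℝ)) (hS : ∀ i ∈ s, IsCSet (S i)) :
    kleisli f (cUnionF s S) = cUnionF s (fun i => kleisli f (S i)) := by
  classical
  -- default continuation
  set νd : Option X → Option X → ℝ :=
    fun a => Option.elim a (dBot X) (fun x => (hf x).1.choose) with hνd
  have hνdD : ∀ a, IsDistO (νd a) := by
    intro a
    cases a with
    | none => exact isDistO_dBot
    | some x => exact (hf x).2.1 _ (hf x).1.choose_spec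
  have hνdf : ∀ x : X, νd (some x) ∈ f x := fun x => (hf x).1.choose_spec
  ext g
  constructor
  · -- ⊆
    rintro ⟨μ, ⟨w, hw0, hw1, μ', hμ', rfl⟩, ν, hνD, hνf, rfl⟩
    have hμ'D : ∀ i ∈ s, IsDistO (μ' i) := fun i hi => (hS i hi).2.1 _ (hμ' i hi)
    set νs : I → Option X → Option X → ℝ := fun i => if w i = 0 then νd else ν with hνs
    have hνsD : ∀ i, ∀ a, IsDistO (νs i a) := by
      intro i a; rw [hνs]; dsimp only; split
      · exact hνdD a
      · exact hνD a
    refine ⟨w, hw0, hw1, fun i b => ∑' a, μ' i a * νs i a b, ?_, ?_⟩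
    · intro i hi
      refine ⟨μ' i, hμ' i hi, νs i, hνsD i, ?_, rfl⟩
      intro x hx
      by_cases h0 : w i = 0
      · rw [hνs]; dsimp only; rw [if_pos h0]; exact hνdf x
      · rw [hνs]; dsimp only; rw [if_neg h0]
        refine hνf x ?_
        have hpos : 0 < ∑ j ∈ s, w j * μ' j (some x) := by
          refine Finset.sum_pos' (fun j hj => mul_nonneg (hw0 j) ((hμ'D j hj).1 _)) ⟨i, hi, ?_⟩
          exact mul_pos (lt_of_le_of_ne (hw0 i) (Ne.symm h0))
            (lt_of_le_of_ne ((hμ'D i hi).1 _) (Ne.symm hx))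
        exact ne_of_gt hpos
    · funext b
      have hsum : ∀ a, (∑ i ∈ s, w i * μ' i a) * ν a b
          = ∑ i ∈ s, w i * (μ' i a * ν a b) := by
        intro a; rw [Finset.sum_mul]; exact Finset.sum_congr rfl fun i _ => by ring
      have hSm : ∀ i ∈ s, Summable fun a => w i * (μ' i a * ν a b) :=
        fun i hi => (summable_mul_distO (hμ'D i hi) hνD b).mul_left (w i)
      calc (∑' a, (∑ i ∈ s, w i * μ' i a) * ν a b)
          = ∑' a, ∑ i ∈ s, w i * (μ' i a * ν a b) := by
            exact tsum_congr fun a => hsum a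
        _ = ∑ i ∈ s, ∑' a, w i * (μ' i a * ν a b) := Summable.tsum_finsetSum hSm
        _ = ∑ i ∈ s, w i * ∑' a, μ' i a * νs i a b := by
            refine Finset.sum_congr rfl fun i hi => ?_
            by_cases h0 : w i = 0
            · simp [h0]
            · rw [hνs]; dsimp only; rw [if_neg h0, tsum_mul_left]
  · -- ⊇
    rintro ⟨w, hw0, hw1, gi, hgi, rfl⟩
    have H : ∀ i, ∃ μ, ∃ ν : Option X → (Option X → ℝ), i ∈ s →
        μ ∈ S i ∧ (∀ a, IsDistO (ν a)) ∧ (∀ x : X, μ (some x) ≠ 0 → ν (some x) ∈ f x) ∧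
        gi i = fun b => ∑' a, μ a * ν a b := by
      intro i
      by_cases hi : i ∈ s
      · obtain ⟨μ, hμ, ν, h1, h2, h3⟩ := hgi i hi
        exact ⟨μ, ν, fun _ => ⟨hμ, h1, h2, h3⟩⟩
      · exact ⟨dBot X, fun _ => dBot X, fun h => absurd h hi⟩
    choose μi νi hP using H
    have hμiD : ∀ i ∈ s, IsDistO (μi i) := fun i hi => (hS i hi).2.1 _ (hP i hi).1
    have hνiD : ∀ i ∈ s, ∀ a, IsDistO (νi i a) := fun i hi => (hP i hi).2.1
    set F : Option X → ℝ := fun a => ∑ i ∈ s, w i * μi i a with hF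
    have hFnn : ∀ a, 0 ≤ F a := fun a =>
      Finset.sum_nonneg fun i hi => mul_nonneg (hw0 i) ((hμiD i hi).1 a)
    set G : Option X → Option X → ℝ := fun a =>
      if F a = 0 then dBot X
      else fun b => (F a)⁻¹ * ∑ i ∈ s, w i * μi i a * νi i a b with hG
    -- key pointwise identity
    have hkey : ∀ a b, F a * G a b = ∑ i ∈ s, w i * μi i a * νi i a b := by
      intro a b
      by_cases h0 : F a = 0
      · rw [h0, zero_mul]
        symm
        refine Finset.sum_eq_zero fun i hi => ?_
        have hz : w i * μi i a = 0 :=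
          (Finset.sum_eq_zero_iff_of_nonneg
            (fun j hj => mul_nonneg (hw0 j) ((hμiD j hj).1 a))).1 h0 i hi
        rw [hz, zero_mul]
      · rw [hG]; dsimp only; rw [if_neg h0, mul_inv_cancel_left₀ h0]
    have hGD : ∀ a, IsDistO (G a) := by
      intro a
      by_cases h0 : F a = 0
      · rw [hG]; dsimp only; rw [if_pos h0]; exact isDistO_dBot
      · rw [hG]; dsimp only; rw [if_neg h0]
        constructor
        · intro b
          refine mul_nonneg (inv_nonneg.2 (hFnn a)) (Finset.sum_nonneg fun i hi => ?_)
          exact mul_nonneg (mul_nonneg (hw0 i) ((hμiD i hi).1 a)) ((hνiD i hi a).1 b)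
        · have hs : HasSum (fun b => ∑ i ∈ s, w i * μi i a * νi i a b)
              (∑ i ∈ s, w i * μi i a * 1) :=
            hasSum_sum fun i hi => ((hνiD i hi a).2).mul_left (w i * μi i a)
          have hs2 := hs.mul_left (F a)⁻¹
          have : (F a)⁻¹ * ∑ i ∈ s, w i * μi i a * 1 = 1 := by
            simp only [mul_one]
            exact inv_mul_cancel₀ h0
          rwa [this] at hs2
    refine ⟨F, ⟨w, hw0, hw1, μi, fun i hi => (hP i hi).1, rfl⟩, G, hGD, ?_, ?_⟩
    · intro x hx
      have he : G (some x) = fun b =>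
          ∑ i ∈ s, ((F (some x))⁻¹ * (w i * μi i (some x))) * νi i (some x) b := by
        rw [hG]; dsimp only; rw [if_neg hx]
        funext b
        rw [Finset.mul_sum]
        exact Finset.sum_congr rfl fun i _ => by ring
      rw [he]
      refine csets_conv (hf x) s _ ?_ ?_ _ ?_
      · intro i hi
        exact mul_nonneg (inv_nonneg.2 (hFnn _)) (mul_nonneg (hw0 i) ((hμiD i hi).1 _))
      · rw [← Finset.mul_sum]
        exact inv_mul_cancel₀ hx
      · intro i hi hne
        refine (hP i hi).2.2.1 x ?_
        intro h0
        exact hne (by rw [h0]; ring)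
    · funext b
      have hSm : ∀ i ∈ s, Summable fun a => w i * μi i a * νi i a b := by
        intro i hi
        have := (summable_mul_distO (hμiD i hi) (hνiD i hi) b).mul_left (w i)
        refine this.congr fun a => ?_
        ring
      calc (∑ i ∈ s, w i * gi i b)
          = ∑ i ∈ s, w i * ∑' a, μi i a * νi i a b := by
            refine Finset.sum_congr rfl fun i hi => ?_
            rw [(hP i hi).2.2.2]
        _ = ∑ i ∈ s, ∑' a, w i * μi i a * νi i a b := by
            refine Finset.sum_congr rfl fun i hi => ?_
            rw [← tsum_mul_left]
            exact tsum_congr fun a => by ring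
        _ = ∑' a, ∑ i ∈ s, w i * μi i a * νi i a b := (Summable.tsum_finsetSum hSm).symm
        _ = ∑' a, F a * G a b := tsum_congr fun a => (hkey a b).symm
end

section
/- minProb commutes with Kleisli extension: for f : Mem[U] → C(Mem[U]), S ∈ C(Mem[U]), and A ⊆ Mem[U], one has minProb(f†(S), A) = inf_{μ∈S} ∑_{σ∈supp(μ)∩Mem[U]} μ(σ) · minProb(f(σ), A), where f_⊥(⊥) contributes 0. -/
/-! Write `f_⊥` for `f` extended by the set of all distributions at `⊥`, so that
`minProb (f_⊥ ⊥) A = 0` (witnessed by the point mass at `⊥`). The right-hand side is then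
`inf_{μ ∈ S} ∑_a μ(a) · minProb (f_⊥ a) A`, and since `probOf` is linear under mixing,
the probability of `A` under an element `∑_a μ(a) · ν_a` of `f†(S)` is `∑_a μ(a) · probOf ν_a A`.
Each summand is at least `μ(a) · minProb (f_⊥ a) A`, which gives `≥`; choosing every `ν_a`
`ε`-optimal gives an element of `f†(S)` within `ε` of `∑_a μ(a) · minProb (f_⊥ a) A`,
which gives `≤`. -/

section Kleisli

variable {X ι : Type*}

lemma Summable.mul_of_nonneg_of_le_one {μ c : ι → ℝ} (hμ : Summable μ) (hμ0 : ∀ i, 0 ≤ μ i)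
    (hc0 : ∀ i, 0 ≤ c i) (hc1 : ∀ i, c i ≤ 1) : Summable fun i => μ i * c i :=
  hμ.of_nonneg_of_le (fun i => mul_nonneg (hμ0 i) (hc0 i))
    fun i => mul_le_of_le_one_right (hμ0 i) (hc1 i)

lemma probOf_nonneg {μ : Option X → ℝ} (hμ : ∀ a, 0 ≤ μ a) (A : Set X) : 0 ≤ probOf μ A :=
  tsum_nonneg fun _ => hμ _

lemma IsDistO.probOf_le_one {μ : Option X → ℝ} (hμ : IsDistO μ) (A : Set X) :
    probOf μ A ≤ 1 :=
  hμ.2.tsum_eq ▸ tsum_comp_le_tsum_of_inj hμ.2.summable hμ.1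
    ((Option.some_injective X).comp Subtype.val_injective)

lemma minProb_nonneg {S : Set (Option X → ℝ)} (hS : ∀ μ ∈ S, ∀ a, 0 ≤ μ a) (A : Set X) :
    0 ≤ minProb S A :=
  Real.sInf_nonneg <| by
    rintro _ ⟨μ, hμ, rfl⟩
    exact probOf_nonneg (hS μ hμ) A

lemma minProb_le_probOf {S : Set (Option X → ℝ)} (hS : ∀ μ ∈ S, ∀ a, 0 ≤ μ a)
    {ν : Option X → ℝ} (hν : ν ∈ S) (A : Set X) : minProb S A ≤ probOf ν A :=
  csInf_le ⟨0, by rintro _ ⟨μ, hμ, rfl⟩; exact probOf_nonneg (hS μ hμ) A⟩ ⟨ν, hν, rfl⟩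

lemma exists_probOf_lt_minProb_add {S : Set (Option X → ℝ)} (hS : S.Nonempty) (A : Set X)
    {ε : ℝ} (hε : 0 < ε) : ∃ ν ∈ S, probOf ν A < minProb S A + ε := by
  obtain ⟨_, ⟨ν, hν, rfl⟩, hlt⟩ :=
    exists_lt_of_csInf_lt (hS.image _) (lt_add_of_pos_right (minProb S A) hε)
  exact ⟨ν, hν, hlt⟩

lemma isDistO_pi_single_none [DecidableEq X] : IsDistO (Pi.single none 1 : Option X → ℝ) := by
  refine ⟨fun a => ?_, hasSum_pi_single none 1⟩
  rcases a with _ | x <;> simp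

lemma minProb_setOf_isDistO (A : Set X) : minProb {ν : Option X → ℝ | IsDistO ν} A = 0 := by
  classical
  refine le_antisymm ?_ (minProb_nonneg (fun ν hν => hν.1) A)
  refine (minProb_le_probOf (fun ν hν => hν.1) isDistO_pi_single_none A).trans_eq ?_
  simp [probOf]

lemma summable_mul_probOf {μ : ι → ℝ} (hμ : Summable μ) (hμ0 : ∀ i, 0 ≤ μ i)
    {ν : ι → Option X → ℝ} (hν : ∀ i, IsDistO (ν i)) (A : Set X) :
    Summable fun i => μ i * probOf (ν i) A :=
  hμ.mul_of_nonneg_of_le_one hμ0 (fun i => probOf_nonneg (hν i).1 A)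
    fun i => (hν i).probOf_le_one A

lemma probOf_mix {μ : ι → ℝ} (hμ : Summable μ) (hμ0 : ∀ i, 0 ≤ μ i)
    {ν : ι → Option X → ℝ} (hν : ∀ i, IsDistO (ν i)) (A : Set X) :
    probOf (fun b => ∑' i, μ i * ν i b) A = ∑' i, μ i * probOf (ν i) A := by
  have hinner : ∀ i, Summable fun x : A => μ i * ν i (some x) := fun i =>
    (((hν i).2.summable.comp_injective (Option.some_injective X)).subtype A).mul_left (μ i)
  have houter : Summable fun i => ∑' x : A, μ i * ν i (some x) := by
    simpa only [probOf, tsum_mul_left] using summable_mul_probOf hμ hμ0 hν A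
  have hprod : Summable (Function.uncurry fun i (x : A) => μ i * ν i (some x)) :=
    (summable_prod_of_nonneg fun p => mul_nonneg (hμ0 _) ((hν _).1 _)).2 ⟨hinner, houter⟩
  unfold probOf
  rw [hprod.tsum_comm]
  simp only [tsum_mul_left]

lemma tsum_mul_minProb_le_probOf_mix {μ : ι → ℝ} (hμ : Summable μ) (hμ0 : ∀ i, 0 ≤ μ i)
    {T : ι → Set (Option X → ℝ)} (hT : ∀ i, ∀ ν ∈ T i, ∀ a, 0 ≤ ν a)
    {ν : ι → Option X → ℝ} (hν : ∀ i, IsDistO (ν i)) (hνT : ∀ i, μ i ≠ 0 → ν i ∈ T i)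
    (A : Set X) :
    ∑' i, μ i * minProb (T i) A ≤ probOf (fun b => ∑' i, μ i * ν i b) A := by
  have hterm : ∀ i, μ i * minProb (T i) A ≤ μ i * probOf (ν i) A := fun i => by
    by_cases hi : μ i = 0
    · simp [hi]
    · exact mul_le_mul_of_nonneg_left (minProb_le_probOf (hT i) (hνT i hi) A) (hμ0 i)
  have hsum := summable_mul_probOf hμ hμ0 hν A
  rw [probOf_mix hμ hμ0 hν]
  exact (hsum.of_nonneg_of_le (fun i => mul_nonneg (hμ0 i) (minProb_nonneg (hT i) A))
    hterm).tsum_le_tsum hterm hsum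

lemma exists_probOf_mix_le {μ : ι → ℝ} (hμ : HasSum μ 1) (hμ0 : ∀ i, 0 ≤ μ i)
    {T : ι → Set (Option X → ℝ)} (hTne : ∀ i, (T i).Nonempty)
    (hT : ∀ i, ∀ ν ∈ T i, IsDistO ν) (A : Set X) {ε : ℝ} (hε : 0 < ε) :
    ∃ ν : ι → Option X → ℝ, (∀ i, ν i ∈ T i) ∧
      probOf (fun b => ∑' i, μ i * ν i b) A ≤ ∑' i, μ i * minProb (T i) A + ε := by
  choose ν hνT hνlt using fun i => exists_probOf_lt_minProb_add (hTne i) A hε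
  have hν : ∀ i, IsDistO (ν i) := fun i => hT i _ (hνT i)
  have hm0 : ∀ i, 0 ≤ minProb (T i) A := fun i => minProb_nonneg (fun ν hν => (hT i ν hν).1) A
  have hm1 : ∀ i, minProb (T i) A ≤ 1 := fun i =>
    (minProb_le_probOf (fun ν hν => (hT i ν hν).1) (hνT i) A).trans ((hν i).probOf_le_one A)
  have hsum_m : Summable fun i => μ i * minProb (T i) A :=
    hμ.summable.mul_of_nonneg_of_le_one hμ0 hm0 hm1
  refine ⟨ν, hνT, ?_⟩
  calc probOf (fun b => ∑' i, μ i * ν i b) A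
      = ∑' i, μ i * probOf (ν i) A := probOf_mix hμ.summable hμ0 hν A
    _ ≤ ∑' i, (μ i * minProb (T i) A + μ i * ε) :=
        (summable_mul_probOf hμ.summable hμ0 hν A).tsum_le_tsum (fun i => by
          rw [← mul_add]; exact mul_le_mul_of_nonneg_left (hνlt i).le (hμ0 i))
          (hsum_m.add (hμ.summable.mul_right ε))
    _ = ∑' i, μ i * minProb (T i) A + ε := by
        rw [hsum_m.tsum_add (hμ.summable.mul_right ε), tsum_mul_right, hμ.tsum_eq, one_mul]

/-- The paper's `f_⊥`. -/
def botExtend (f : X → Set (Option X → ℝ)) (a : Option X) : Set (Option X → ℝ) :=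
  a.elim {ν | IsDistO ν} f

lemma botExtend_nonempty {f : X → Set (Option X → ℝ)} (hf : ∀ x, (f x).Nonempty)
    (a : Option X) : (botExtend f a).Nonempty := by
  classical
  rcases a with _ | x
  exacts [⟨_, isDistO_pi_single_none⟩, hf x]

lemma isDistO_of_mem_botExtend {f : X → Set (Option X → ℝ)} (hf : ∀ x, ∀ ν ∈ f x, IsDistO ν)
    (a : Option X) : ∀ ν ∈ botExtend f a, IsDistO ν := by
  rcases a with _ | x
  exacts [fun ν hν => hν, hf x]

lemma tsum_some_mul_minProb_eq_tsum_botExtend (f : X → Set (Option X → ℝ))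
    (μ : Option X → ℝ) (A : Set X) :
    ∑' x, μ (some x) * minProb (f x) A = ∑' a, μ a * minProb (botExtend f a) A := by
  refine (Option.some_injective X).tsum_eq
    (f := fun a => μ a * minProb (botExtend f a) A) fun a ha => ?_
  rcases a with _ | x
  · simp [botExtend, minProb_setOf_isDistO] at ha
  · exact ⟨x, rfl⟩

variable {f : X → Set (Option X → ℝ)} {S : Set (Option X → ℝ)}

lemma kleisli_nonneg (hS : ∀ μ ∈ S, IsDistO μ) : ∀ g ∈ kleisli f S, ∀ b, 0 ≤ g b := by
  rintro _ ⟨μ, hμ, ν, hν, -, rfl⟩ b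
  exact tsum_nonneg fun a => mul_nonneg ((hS μ hμ).1 a) ((hν a).1 b)

lemma exists_tsum_mul_minProb_botExtend_le_probOf (hf : ∀ x, ∀ ν ∈ f x, IsDistO ν)
    (hS : ∀ μ ∈ S, IsDistO μ) {g : Option X → ℝ} (hg : g ∈ kleisli f S) (A : Set X) :
    ∃ μ ∈ S, ∑' a, μ a * minProb (botExtend f a) A ≤ probOf g A := by
  obtain ⟨μ, hμ, ν, hν, hνf, rfl⟩ := hg
  have hνT : ∀ a, μ a ≠ 0 → ν a ∈ botExtend f a := fun a => by
    rcases a with _ | x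
    exacts [fun _ => hν none, hνf x]
  exact ⟨μ, hμ, tsum_mul_minProb_le_probOf_mix (hS μ hμ).2.summable (hS μ hμ).1
    (fun a ν hν => (isDistO_of_mem_botExtend hf a ν hν).1) hν hνT A⟩

lemma exists_mem_kleisli_probOf_le (hfne : ∀ x, (f x).Nonempty)
    (hf : ∀ x, ∀ ν ∈ f x, IsDistO ν) (hS : ∀ μ ∈ S, IsDistO μ)
    {μ : Option X → ℝ} (hμ : μ ∈ S) (A : Set X) {ε : ℝ} (hε : 0 < ε) :
    ∃ g ∈ kleisli f S, probOf g A ≤ ∑' a, μ a * minProb (botExtend f a) A + ε := by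
  obtain ⟨ν, hνT, hle⟩ := exists_probOf_mix_le (hS μ hμ).2 (hS μ hμ).1
    (botExtend_nonempty hfne) (isDistO_of_mem_botExtend hf) A hε
  exact ⟨_, ⟨μ, hμ, ν, fun a => isDistO_of_mem_botExtend hf a _ (hνT a),
    fun x _ => hνT (some x), rfl⟩, hle⟩

end Kleisli

theorem stmt_13_general {X : Type*}
    (f : X → Set (Option X → ℝ)) (hf : ∀ x, IsCSet (f x))
    (S : Set (Option X → ℝ)) (hS : IsCSet S) (A : Set X) :
    minProb (kleisli f S) A
      = sInf ((fun μ => ∑' x : X, μ (some x) * minProb (f x) A) '' S) := by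
  obtain ⟨⟨μ₀, hμ₀⟩, hSd, -⟩ := hS
  have hfne : ∀ x, (f x).Nonempty := fun x => (hf x).1
  have hfd : ∀ x, ∀ ν ∈ f x, IsDistO ν := fun x => (hf x).2.1
  simp only [tsum_some_mul_minProb_eq_tsum_botExtend f]
  apply le_antisymm
  · refine le_csInf ⟨_, μ₀, hμ₀, rfl⟩ ?_
    rintro _ ⟨μ, hμ, rfl⟩
    refine le_of_forall_pos_le_add fun ε hε => ?_
    obtain ⟨g, hg, hle⟩ := exists_mem_kleisli_probOf_le hfne hfd hSd hμ A hε
    exact (minProb_le_probOf (kleisli_nonneg hSd) hg A).trans hle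
  · obtain ⟨g₀, hg₀, -⟩ := exists_mem_kleisli_probOf_le hfne hfd hSd hμ₀ A one_pos
    refine le_csInf ⟨_, g₀, hg₀, rfl⟩ ?_
    rintro _ ⟨g, hg, rfl⟩
    obtain ⟨μ, hμ, hle⟩ := exists_tsum_mul_minProb_botExtend_le_probOf hfd hSd hg A
    refine le_trans (csInf_le ⟨0, ?_⟩ ⟨μ, hμ, rfl⟩) hle
    rintro _ ⟨μ', hμ', rfl⟩
    exact tsum_nonneg fun a => mul_nonneg ((hSd μ' hμ').1 a)
      (minProb_nonneg (fun ν hν => (isDistO_of_mem_botExtend hfd a ν hν).1) A)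

/-- `minProb` commutes with Kleisli extension:
`minProb (f†(S), A) = inf_{μ∈S} ∑_{σ} μ(σ) · minProb (f σ) A`, where the sum
ranges over proper states (the `⊥` branch contributes `0`). -/
theorem stmt_13 {X : Type*} [Countable X]
    (f : X → Set (Option X → ℝ)) (hf : ∀ x, IsCSet (f x))
    (S : Set (Option X → ℝ)) (hS : IsCSet S) (A : Set X) :
    minProb (kleisli f S) A
      = sInf ((fun μ => ∑' x : X, μ (some x) * minProb (f x) A) '' S) :=
  stmt_13_general f hf S hS A
end
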